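/- For every nonempty finite trace π = π₀,…,π_n over 2^P and all propositional formulas C, G over P: π satisfies the LTLf formula ◇(C ∧ ○(G ∧ last)) under standard LTLf finite-trace semantics at position 0 (i.e., n ≥ 1, C holds at position n−1 and G holds at position n) if and only if π ⊨ ⟨true*;C;G⟩end under LDLf semantics. -/
import Mathlib


/-- Propositional formulas over atomic propositions `P`. -/
inductive PropForm (P : Type) : Type
  | tru : PropForm P
  | atom : P → PropForm P
  | not : PropForm P → PropForm P
  | and : PropForm P → PropForm P → PropForm P

/-- Satisfaction of a propositional formula by an interpretation (subset of `P`). -/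
def PropForm.Sat {P : Type} (I : Set P) : PropForm P → Prop
  | .tru => True
  | .atom p => p ∈ I
  | .not ϕ => ¬ PropForm.Sat I ϕ
  | .and ϕ ψ => PropForm.Sat I ϕ ∧ PropForm.Sat I ψ

mutual
/-- LDLf formulas over atomic propositions `P`. -/
inductive LDLf (P : Type) : Type
  | tt : LDLf P
  | neg : LDLf P → LDLf P
  | conj : LDLf P → LDLf P → LDLf P
  | dia : PathExp P → LDLf P → LDLf P

/-- Path expressions of LDLf. -/
inductive PathExp (P : Type) : Type
  | prop : PropForm P → PathExp P
  | test : LDLf P → PathExp P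
  | plus : PathExp P → PathExp P → PathExp P
  | comp : PathExp P → PathExp P → PathExp P
  | star : PathExp P → PathExp P
end

mutual
/-- `LDLf.SatAt π φ i` : the LDLf formula `φ` is true at position `i` of the finite trace `π`. -/
def LDLf.SatAt {P : Type} (π : List (Set P)) : LDLf P → ℕ → Prop
  | .tt => fun _ => True
  | .neg φ => fun i => ¬ LDLf.SatAt π φ i
  | .conj φ₁ φ₂ => fun i => LDLf.SatAt π φ₁ i ∧ LDLf.SatAt π φ₂ i
  | .dia ρ φ => fun i => ∃ j, i ≤ j ∧ j ≤ π.length ∧ PathExp.Sem π ρ i j ∧ LDLf.SatAt π φ j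

/-- `PathExp.Sem π ρ i j` : the relation `π(i,j) ∈ L(ρ)`. -/
def PathExp.Sem {P : Type} (π : List (Set P)) : PathExp P → ℕ → ℕ → Prop
  | .prop ϕ => fun i j => j = i + 1 ∧ j ≤ π.length ∧ PropForm.Sat (π.getD i ∅) ϕ
  | .test ψ => fun i j => j = i ∧ LDLf.SatAt π ψ i
  | .plus ρ₁ ρ₂ => fun i j => PathExp.Sem π ρ₁ i j ∨ PathExp.Sem π ρ₂ i j
  | .comp ρ₁ ρ₂ => fun i j => ∃ k, PathExp.Sem π ρ₁ i k ∧ PathExp.Sem π ρ₂ k j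
  | .star ρ => Relation.ReflTransGen (PathExp.Sem π ρ)
end

/-- `[ρ]φ ≐ ¬⟨ρ⟩¬φ`. -/
def LDLf.box {P : Type} (ρ : PathExp P) (φ : LDLf P) : LDLf P := .neg (.dia ρ (.neg φ))

/-- `ff ≐ ¬tt`. -/
def LDLf.ff {P : Type} : LDLf P := .neg .tt

/-- A propositional formula `ϕ` used as an LDLf formula stands for `⟨ϕ⟩tt`. -/
def LDLf.ofProp {P : Type} (ϕ : PropForm P) : LDLf P := .dia (.prop ϕ) .tt

/-- `end ≐ [true?]ff`. -/
def LDLf.endf {P : Type} : LDLf P := LDLf.box (.test (LDLf.ofProp .tru)) LDLf.ff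

/-- `last ≐ [true]end`. -/
def LDLf.lastf {P : Type} : LDLf P := LDLf.box (.prop .tru) LDLf.endf

/-- `π ⊨ φ` means `π,0 ⊨ φ`. -/
def LDLf.Sat {P : Type} (π : List (Set P)) (φ : LDLf P) : Prop := LDLf.SatAt π φ 0

/-- LTLf formulas over atomic propositions `P`. -/
inductive LTLf (P : Type) : Type
  | prop : PropForm P → LTLf P
  | neg : LTLf P → LTLf P
  | conj : LTLf P → LTLf P → LTLf P
  | next : LTLf P → LTLf P
  | untl : LTLf P → LTLf P → LTLf P

/-- Standard LTLf finite-trace semantics: `LTLf.SatAt π φ i` means `φ` holds at position `i`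
of the nonempty finite trace `π`. -/
def LTLf.SatAt {P : Type} (π : List (Set P)) : LTLf P → ℕ → Prop
  | .prop ϕ => fun i => PropForm.Sat (π.getD i ∅) ϕ
  | .neg φ => fun i => ¬ LTLf.SatAt π φ i
  | .conj φ₁ φ₂ => fun i => LTLf.SatAt π φ₁ i ∧ LTLf.SatAt π φ₂ i
  | .next φ => fun i => i + 1 < π.length ∧ LTLf.SatAt π φ (i + 1)
  | .untl φ₁ φ₂ => fun i => ∃ j, i ≤ j ∧ j < π.length ∧ LTLf.SatAt π φ₂ j ∧
      ∀ k, i ≤ k → k < j → LTLf.SatAt π φ₁ k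

/-- `◇φ ≐ true U φ`. -/
def LTLf.ev {P : Type} (φ : LTLf P) : LTLf P := .untl (.prop .tru) φ

/-- `□φ ≐ ¬◇¬φ`. -/
def LTLf.always {P : Type} (φ : LTLf P) : LTLf P := .neg (LTLf.ev (.neg φ))

/-- `last ≐ ¬○true`: holds at `i` iff `i` is the final position of the trace. -/
def LTLf.lastf {P : Type} : LTLf P := .neg (.next (.prop .tru))

/-- `π ⊨ φ` means `φ` holds at position `0` of `π`. -/
def LTLf.Sat {P : Type} (π : List (Set P)) (φ : LTLf P) : Prop := LTLf.SatAt π φ 0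


/-- On nonempty finite traces, the LTLf formula `◇(C ∧ ○(G ∧ last))` is equivalent to the
LDLf formula `⟨true*;C;G⟩end`. -/
theorem ltlf_C_immediately_G_iff_ldlf {P : Type} (π : List (Set P)) (hπ : π ≠ [])
    (C G : PropForm P) :
    LTLf.Sat π (LTLf.ev (.conj (.prop C)
        (.next (.conj (.prop G) LTLf.lastf)))) ↔
      LDLf.Sat π (.dia (.comp (.star (.prop .tru))
        (.comp (.prop C) (.prop G))) LDLf.endf) := by
  have hstar : ∀ i j : ℕ, i ≤ j → j ≤ π.length →
      PathExp.Sem π (.star (.prop .tru)) i j := by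
    intro i j hij hjl
    show Relation.ReflTransGen _ i j
    induction j, hij using Nat.le_induction with
    | base => exact Relation.ReflTransGen.refl
    | succ n hn ih =>
      exact Relation.ReflTransGen.tail (ih (Nat.le_of_succ_le hjl))
        ⟨rfl, hjl, trivial⟩
  have hend : ∀ j : ℕ, j ≤ π.length → (LDLf.SatAt π LDLf.endf j ↔ j = π.length) := by
    intro j hj
    simp only [LDLf.endf, LDLf.box, LDLf.ff, LDLf.ofProp, LDLf.SatAt, PathExp.Sem,
      PropForm.Sat]
    constructor
    · intro h
      by_contra hne
      exact h ⟨j, le_refl j, hj, ⟨rfl, ⟨j+1, by omega, by omega, ⟨rfl, by omega, trivial⟩, trivial⟩⟩,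
        fun hf => hf trivial⟩
    · rintro rfl ⟨j', -, -, ⟨rfl, j₂, -, -, ⟨rfl, hm2, -⟩, -⟩, -⟩
      omega
  constructor
  · rintro ⟨j, -, hjlen, ⟨hC, hjn, hG, hlast⟩, -⟩
    have hlen : j + 2 = π.length := by
      by_contra h
      exact hlast ⟨by omega, trivial⟩
    refine ⟨j + 2, by omega, by omega,
      ⟨j, hstar 0 j (by omega) (by omega), j + 1, ⟨rfl, by omega, hC⟩,
        ⟨rfl, by omega, hG⟩⟩, (hend _ (by omega)).2 hlen⟩
  · rintro ⟨j, -, hjlen, ⟨k, hk, m, ⟨rfl, hm, hC⟩, ⟨rfl, hj2, hG⟩⟩, hendj⟩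
    have hj : k + 2 = π.length := (hend _ hjlen).1 hendj
    refine ⟨k, by omega, by omega, ⟨hC, ⟨by omega, hG, ?_⟩⟩, fun _ _ _ => trivial⟩
    rintro ⟨hlt, -⟩
    omega
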